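/- arXiv:2109.02282 — 2 statements merged into one kernel-verified Lean document; each statement's English description precedes it below -/
import Mathlib

section
/- Let $(\xi_j)_{j\ge 0}$ be i.i.d. real random variables with $\mathbb{E}|\xi_0|^s<\infty$ for some $s>0$, and for $n\in\mathbb{N}$, $1\le k\le n-1$ set $\lambda_k^{(n)}=\sum_{j=0}^{n-1}\omega_n^{kj}\xi_j$ and $\widetilde{\lambda}_k^{(n)}=\sum_{j=0}^{n-1}\omega_n^{kj}(\xi_j\mathbf{1}_{|\xi_j|\le n^{1/s}}-\mathbb{E}[\xi_j\mathbf{1}_{|\xi_j|\le n^{1/s}}])$. Then almost surely $\max_{1\le k\le n-1}\big||\lambda_k^{(n)}|-|\widetilde{\lambda}_k^{(n)}|\big|\to 0$ as $n\to\infty$ (in fact the maximum is eventually $0$). -/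
open MeasureTheory ProbabilityTheory Filter Topology

/-- Truncation procedure: for i.i.d. `(ξ_j)` with `E|ξ_0|^s < ∞`, the maximal difference
between the moduli of the circulant eigenvalues of the original sequence and of the
truncated-and-centered sequence tends to `0` almost surely. -/
theorem stmt_10 {Ω : Type*} [MeasurableSpace Ω] (P : Measure Ω) [IsProbabilityMeasure P]
    (ξ : ℕ → Ω → ℝ) (hmeas : ∀ j, Measurable (ξ j))
    (hindep : iIndepFun ξ P)
    (hident : ∀ j, P.map (ξ j) = P.map (ξ 0))
    (s : ℝ) (hs : 0 < s)
    (hmom : Integrable (fun ω => |ξ 0 ω| ^ s) P)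
    (lam lamTilde : ℕ → ℕ → Ω → ℂ)
    (hlam : ∀ n k ω, lam n k ω =
      ∑ j ∈ Finset.range n,
        (Complex.exp (2 * Real.pi * Complex.I / n)) ^ (k * j) * (ξ j ω : ℂ))
    (hlamTilde : ∀ n k ω, lamTilde n k ω =
      ∑ j ∈ Finset.range n,
        (Complex.exp (2 * Real.pi * Complex.I / n)) ^ (k * j) *
          (((if |ξ j ω| ≤ (n : ℝ) ^ (1 / s) then ξ j ω else 0)
            - ∫ ω', (if |ξ j ω'| ≤ (n : ℝ) ^ (1 / s) then ξ j ω' else 0) ∂P : ℝ) : ℂ)) :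
    ∀ᵐ ω ∂P,
      Tendsto
        (fun n => ⨆ k ∈ Finset.Icc 1 (n - 1),
          |‖lam n k ω‖ - ‖lamTilde n k ω‖|)
        atTop (𝓝 0) := by
  -- Borel–Cantelli: almost surely, eventually `|ξ j| ≤ j ^ (1/s)`.
  have hmeasR : Measurable fun x : ℝ => |x| ^ s := (Real.continuous_rpow_const hs.le).measurable.comp measurable_abs
  have hsum : (∑' j : ℕ, P {ω | (j : ℝ) < |ξ j ω| ^ s}) ≠ ⊤ := by
    have heq : ∀ j : ℕ, P {ω | (j : ℝ) < |ξ j ω| ^ s}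
        = P {ω | (fun ω => |ξ 0 ω| ^ s) ω ∈ Set.Ioi (j : ℝ)} := by
      intro j
      have hset : MeasurableSet {x : ℝ | (j : ℝ) < |x| ^ s} :=
        measurableSet_lt measurable_const hmeasR
      have h1 : P {ω | (j : ℝ) < |ξ j ω| ^ s} = (P.map (ξ j)) {x | (j : ℝ) < |x| ^ s} := by
        rw [Measure.map_apply (hmeas j) hset]; rfl
      have h2 : P {ω | (j : ℝ) < |ξ 0 ω| ^ s} = (P.map (ξ 0)) {x | (j : ℝ) < |x| ^ s} := by
        rw [Measure.map_apply (hmeas 0) hset]; rfl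
      rw [h1, hident j, ← h2]
      simp [Set.mem_Ioi]
    rw [tsum_congr heq]
    letI : MeasureSpace Ω := ⟨P⟩
    exact (ProbabilityTheory.tsum_prob_mem_Ioi_lt_top hmom
      (fun ω => Real.rpow_nonneg (abs_nonneg _) s)).ne
  have hae := ae_eventually_notMem (μ := P)
    (s := fun j => {ω | (j : ℝ) < |ξ j ω| ^ s}) hsum
  filter_upwards [hae] with ω hω
  have htail : ∀ᶠ j : ℕ in atTop, |ξ j ω| ≤ (j : ℝ) ^ (1 / s) := by
    filter_upwards [hω] with j hj
    have h1 : |ξ j ω| ^ s ≤ (j : ℝ) := not_lt.1 hj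
    have h2 := Real.rpow_le_rpow (Real.rpow_nonneg (abs_nonneg _) s) h1
      (by positivity : (0:ℝ) ≤ 1 / s)
    rwa [← Real.rpow_mul (abs_nonneg _), mul_one_div, div_self hs.ne', Real.rpow_one] at h2
  obtain ⟨N, hN⟩ := eventually_atTop.1 htail
  set C : ℝ := ∑ j ∈ Finset.range N, |ξ j ω| with hCdef
  have hC : ∀ j < N, |ξ j ω| ≤ C := fun j hj =>
    Finset.single_le_sum (f := fun i => |ξ i ω|) (fun i _ => abs_nonneg _) (Finset.mem_range.2 hj)
  have hbig : ∀ᶠ n : ℕ in atTop, C ≤ (n : ℝ) ^ (1 / s) :=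
    ((tendsto_rpow_atTop (by positivity : (0:ℝ) < 1 / s)).comp
      tendsto_natCast_atTop_atTop).eventually_ge_atTop C
  have heq0 : ∀ᶠ n : ℕ in atTop,
      (⨆ k ∈ Finset.Icc 1 (n - 1),
        |‖lam n k ω‖ - ‖lamTilde n k ω‖|) = 0 := by
    filter_upwards [hbig, eventually_ge_atTop N, eventually_ge_atTop 1] with n hn1 hn2 hn3
    have htrunc : ∀ j < n, |ξ j ω| ≤ (n : ℝ) ^ (1 / s) := by
      intro j hj
      rcases lt_or_ge j N with h | h
      · exact (hC j h).trans hn1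
      · exact (hN j h).trans
          (Real.rpow_le_rpow (Nat.cast_nonneg j) (Nat.cast_le.2 hj.le) (by positivity))
    have hkey : ∀ k ∈ Finset.Icc 1 (n - 1), lamTilde n k ω = lam n k ω := by
      intro k hk
      obtain ⟨hk1, hk2⟩ := Finset.mem_Icc.1 hk
      have hkn : k < n := by omega
      set z : ℂ := Complex.exp (2 * Real.pi * Complex.I / n) with hz
      have hprim : IsPrimitiveRoot z n := Complex.isPrimitiveRoot_exp n (by omega)
      have hz1 : z ^ k ≠ 1 := hprim.pow_ne_one_of_pos_of_lt (by omega) hkn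
      have hzn : (z ^ k) ^ n = 1 := by
        rw [← pow_mul, mul_comm, pow_mul, hprim.pow_eq_one, one_pow]
      have hgeom : ∑ j ∈ Finset.range n, (z ^ k) ^ j = 0 := by
        rw [geom_sum_eq hz1, hzn, sub_self, zero_div]
      set c : ℝ := ∫ ω', (if |ξ 0 ω'| ≤ (n : ℝ) ^ (1 / s) then ξ 0 ω' else 0) ∂P with hc
      have hfm : Measurable fun x : ℝ => if |x| ≤ (n : ℝ) ^ (1 / s) then x else 0 :=
        Measurable.ite (measurableSet_le measurable_abs measurable_const)
          measurable_id measurable_const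
      have hconst : ∀ j, (∫ ω', (if |ξ j ω'| ≤ (n : ℝ) ^ (1 / s) then ξ j ω' else 0) ∂P) = c := by
        intro j
        have e1 : ∫ ω', (if |ξ j ω'| ≤ (n : ℝ) ^ (1 / s) then ξ j ω' else 0) ∂P
            = ∫ x, (if |x| ≤ (n : ℝ) ^ (1 / s) then x else 0) ∂(P.map (ξ j)) :=
          (integral_map (hmeas j).aemeasurable hfm.aestronglyMeasurable).symm
        have e2 : ∫ x, (if |x| ≤ (n : ℝ) ^ (1 / s) then x else 0) ∂(P.map (ξ 0)) = c :=
          integral_map (hmeas 0).aemeasurable hfm.aestronglyMeasurable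
        rw [e1, hident j, e2]
      rw [hlamTilde, hlam]
      have hterm : ∀ j ∈ Finset.range n,
          z ^ (k * j) *
            (((if |ξ j ω| ≤ (n : ℝ) ^ (1 / s) then ξ j ω else 0)
              - ∫ ω', (if |ξ j ω'| ≤ (n : ℝ) ^ (1 / s) then ξ j ω' else 0) ∂P : ℝ) : ℂ)
          = z ^ (k * j) * (ξ j ω : ℂ) - (c : ℂ) * (z ^ k) ^ j := by
        intro j hj
        rw [hconst j, if_pos (htrunc j (Finset.mem_range.1 hj)), ← pow_mul]
        push_cast
        ring
      rw [Finset.sum_congr rfl hterm, Finset.sum_sub_distrib, ← Finset.mul_sum, hgeom,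
        mul_zero, sub_zero]
    have hzero : ∀ k : ℕ,
        (⨆ _ : k ∈ Finset.Icc 1 (n - 1),
          |‖lam n k ω‖ - ‖lamTilde n k ω‖|) = 0 := by
      intro k
      by_cases hk : k ∈ Finset.Icc 1 (n - 1)
      · rw [ciSup_pos hk, hkey k hk, sub_self, abs_zero]
      · haveI : IsEmpty (k ∈ Finset.Icc 1 (n - 1)) := ⟨hk⟩
        exact Real.iSup_of_isEmpty _
    rw [iSup_congr hzero, ciSup_const]
  exact Tendsto.congr' (heq0.mono fun n h => h.symm) tendsto_const_nhds
end

section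
/- With $\mathfrak{a}_n=\sqrt{n\ln(n/2)}$ and $\mathfrak{b}_n=\tfrac12\sqrt{n/\ln(n/2)}$, for every $x,y\in\mathbb{R}$, $\lim_{n\to\infty}\big(\mathbb{P}(\mathsf{E}_1\le (\mathfrak{b}_n y+\mathfrak{a}_n)^2/n) - \mathbb{P}(x^2/n<\mathsf{E}_1\le (\mathfrak{b}_n y+\mathfrak{a}_n)^2/n)\big)^{\lfloor n/2\rfloor}$ exists, and $\lim_{n\to\infty}\big(e^{-x^2/n}-e^{-(\mathfrak{b}_n y+\mathfrak{a}_n)^2/n}\big)^{\lfloor n/2\rfloor}=e^{-x^2/2}e^{-e^{-y}}$. -/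
open MeasureTheory Filter Topology

private lemma nat_div_two_tendsto : Tendsto (fun n : ℕ => n / 2) atTop atTop :=
  tendsto_atTop_atTop.2 fun b => ⟨2 * b, fun n hn => by omega⟩

private lemma ratio_tendsto :
    Tendsto (fun n : ℕ => ((n / 2 : ℕ) : ℝ) / n) atTop (𝓝 (1 / 2)) := by
  have hinv : Tendsto (fun n : ℕ => ((n : ℝ))⁻¹) atTop (𝓝 0) :=
    tendsto_inv_atTop_zero.comp tendsto_natCast_atTop_atTop
  have hlow : Tendsto (fun n : ℕ => (1 - ((n : ℝ))⁻¹) / 2) atTop (𝓝 (1 / 2)) := by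
    have := ((tendsto_const_nhds : Tendsto (fun _ : ℕ => (1:ℝ)) atTop (𝓝 1)).sub hinv).div_const 2
    norm_num at this
    exact this
  refine tendsto_of_tendsto_of_tendsto_of_le_of_le' hlow tendsto_const_nhds ?_ ?_
  · filter_upwards [eventually_ge_atTop 1] with n hn
    have hn' : (0:ℝ) < n := by exact_mod_cast hn
    rw [div_le_div_iff₀ two_pos hn']
    have h1 : (n : ℕ) ≤ 2 * (n / 2) + 1 := by omega
    have h1' : (n : ℝ) ≤ 2 * ((n / 2 : ℕ) : ℝ) + 1 := by exact_mod_cast h1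
    have : (1 - (n:ℝ)⁻¹) * n = n - 1 := by field_simp
    rw [this]; linarith
  · filter_upwards [eventually_ge_atTop 1] with n hn
    have hn' : (0:ℝ) < n := by exact_mod_cast hn
    rw [div_le_div_iff₀ hn' two_pos]
    have h1 : 2 * (n / 2) ≤ (n : ℕ) := by omega
    have h1' : 2 * ((n / 2 : ℕ) : ℝ) ≤ (n : ℝ) := by exact_mod_cast h1
    linarith

private lemma mul_exp_sub_one (c : ℝ) :
    Tendsto (fun n : ℕ => (n : ℝ) * (Real.exp (c / n) - 1)) atTop (𝓝 c) := by
  rcases eq_or_ne c 0 with rfl | hc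
  · simpa using (tendsto_const_nhds : Tendsto (fun _ : ℕ => (0:ℝ)) atTop (𝓝 0))
  · have hd : Tendsto (slope Real.exp 0) (𝓝[≠] 0) (𝓝 1) := by
      have := (Real.hasDerivAt_exp 0)
      rw [hasDerivAt_iff_tendsto_slope] at this
      simpa using this
    have hseq : Tendsto (fun n : ℕ => c / n) atTop (𝓝[≠] (0:ℝ)) := by
      apply tendsto_nhdsWithin_of_tendsto_nhds_of_eventually_within
      · exact tendsto_const_nhds.div_atTop tendsto_natCast_atTop_atTop
      · filter_upwards [eventually_ge_atTop 1] with n hn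
        have hn' : (0:ℝ) < n := by exact_mod_cast hn
        simp [Set.mem_setOf_eq, div_eq_zero_iff, hc, hn'.ne']
    have h := (hd.comp hseq).const_mul c
    simp only [mul_one] at h
    refine h.congr' ?_
    filter_upwards [eventually_ge_atTop 1] with n hn
    have hn' : (0:ℝ) < n := by exact_mod_cast hn
    simp only [Function.comp, slope_def_field, Real.exp_zero, sub_zero]
    field_simp

private lemma pow_half_tendsto (g : ℕ → ℝ) (z : ℝ) (hg : Tendsto g atTop (𝓝 z)) :
    Tendsto (fun n : ℕ => (1 + g n / n) ^ (n / 2)) atTop (𝓝 (Real.exp (z / 2))) := by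
  have hu : Tendsto (fun n : ℕ => g n / n) atTop (𝓝 0) :=
    hg.div_atTop tendsto_natCast_atTop_atTop
  set u : ℕ → ℝ := fun n => g n / n with hu_def
  have hpos : ∀ᶠ n in atTop, 0 < 1 + u n := by
    filter_upwards [hu.eventually (eventually_gt_nhds (by norm_num : (-1:ℝ) < 0))] with n h
    linarith
  have hC : Tendsto (fun n : ℕ => ((n / 2 : ℕ) : ℝ) * u n) atTop (𝓝 (z / 2)) := by
    have heq : ∀ᶠ n : ℕ in atTop,
        (((n / 2 : ℕ) : ℝ) / n) * g n = ((n / 2 : ℕ) : ℝ) * u n := by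
      filter_upwards [eventually_ge_atTop 1] with n hn
      have hn' : ((n:ℝ)) ≠ 0 := Nat.cast_ne_zero.2 (by omega)
      show ((n / 2 : ℕ) : ℝ) / n * g n = ((n / 2 : ℕ) : ℝ) * (g n / n)
      rw [div_mul_eq_mul_div, mul_div_assoc]
    have h := ratio_tendsto.mul hg
    rw [show (1/2 : ℝ) * z = z / 2 by ring] at h
    exact h.congr' heq
  have hB : Tendsto (fun n : ℕ => ((n / 2 : ℕ) : ℝ) * u n / (1 + u n)) atTop (𝓝 (z / 2)) := by
    have h1u : Tendsto (fun n : ℕ => 1 + u n) atTop (𝓝 1) := by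
      simpa using (tendsto_const_nhds : Tendsto (fun _ : ℕ => (1:ℝ)) atTop (𝓝 1)).add hu
    have h := hC.div h1u one_ne_zero
    rw [div_one] at h
    exact h
  have hA : Tendsto (fun n : ℕ => ((n / 2 : ℕ) : ℝ) * Real.log (1 + u n)) atTop (𝓝 (z / 2)) := by
    refine tendsto_of_tendsto_of_tendsto_of_le_of_le' hB hC ?_ ?_
    · filter_upwards [hpos] with n hp
      have hlog : 1 - (1 + u n)⁻¹ ≤ Real.log (1 + u n) := by
        have := Real.log_le_sub_one_of_pos (inv_pos.2 hp)
        rw [Real.log_inv] at this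
        linarith
      have h2 : u n / (1 + u n) ≤ Real.log (1 + u n) := by
        have : u n / (1 + u n) = 1 - (1 + u n)⁻¹ := by field_simp; ring
        linarith [this ▸ hlog]
      calc ((n / 2 : ℕ) : ℝ) * u n / (1 + u n)
          = ((n / 2 : ℕ) : ℝ) * (u n / (1 + u n)) := by ring
        _ ≤ ((n / 2 : ℕ) : ℝ) * Real.log (1 + u n) :=
            mul_le_mul_of_nonneg_left h2 (by positivity)
    · filter_upwards [hpos] with n hp
      have hlog : Real.log (1 + u n) ≤ u n := by
        have := Real.log_le_sub_one_of_pos hp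
        linarith
      exact mul_le_mul_of_nonneg_left hlog (by positivity)
  have hexp := (Real.continuous_exp.tendsto _).comp hA
  refine hexp.congr' ?_
  filter_upwards [hpos] with n hp
  simp only [Function.comp]
  rw [Real.exp_nat_mul, Real.exp_log hp]

private lemma sq_div_eq (a b : ℕ → ℝ)
    (ha : ∀ n, a n = Real.sqrt (n * Real.log (n / 2)))
    (hb : ∀ n, b n = (1 / 2) * Real.sqrt (n / Real.log (n / 2)))
    (y : ℝ) :
    ∀ n : ℕ, 3 ≤ n → (b n * y + a n) ^ 2 / n
      = y ^ 2 / (4 * Real.log (n / 2)) + y + Real.log (n / 2) := by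
  intro n hn
  have hn3 : (3:ℝ) ≤ n := by exact_mod_cast hn
  have hn0 : (0:ℝ) < n := by linarith
  have hL : 0 < Real.log ((n:ℝ) / 2) := Real.log_pos (by linarith)
  set L := Real.log ((n:ℝ) / 2) with hLdef
  have hs : Real.sqrt ((n:ℝ) / L) ^ 2 = (n:ℝ) / L := Real.sq_sqrt (by positivity)
  have ht : Real.sqrt ((n:ℝ) * L) ^ 2 = (n:ℝ) * L := Real.sq_sqrt (by positivity)
  have hst : Real.sqrt ((n:ℝ) / L) * Real.sqrt ((n:ℝ) * L) = n := by
    rw [← Real.sqrt_mul (by positivity)]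
    rw [show (n:ℝ) / L * (n * L) = (n:ℝ) ^ 2 by field_simp]
    exact Real.sqrt_sq hn0.le
  have expand : (b n * y + a n) ^ 2
      = (1/4) * (Real.sqrt ((n:ℝ) / L) ^ 2) * y ^ 2
        + (Real.sqrt ((n:ℝ) / L) * Real.sqrt ((n:ℝ) * L)) * y
        + Real.sqrt ((n:ℝ) * L) ^ 2 := by
    rw [hb, ha]; ring
  rw [expand, hs, ht, hst]
  field_simp

/-- With `𝔞_n = √(n ln(n/2))`, `𝔟_n = ½√(n / ln(n/2))` and `E₁` an exponential random
variable of parameter `1`: the limit of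
`(P(E₁ ≤ (𝔟_n y + 𝔞_n)²/n) - P(x²/n < E₁ ≤ (𝔟_n y + 𝔞_n)²/n))^{⌊n/2⌋}` exists, and
`(e^{-x²/n} - e^{-(𝔟_n y + 𝔞_n)²/n})^{⌊n/2⌋} → e^{-x²/2} e^{-e^{-y}}`. -/
theorem stmt_14 {Ω : Type*} [MeasurableSpace Ω] (P : Measure Ω) [IsProbabilityMeasure P]
    (E : Ω → ℝ) (hE : Measurable E)
    (hcdf : ∀ v : ℝ, 0 ≤ v → (P {ω | E ω ≤ v}).toReal = 1 - Real.exp (-v))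
    (hint : ∀ u v : ℝ, 0 ≤ u → u < v →
      (P {ω | u < E ω ∧ E ω ≤ v}).toReal = Real.exp (-u) - Real.exp (-v))
    (a b : ℕ → ℝ)
    (ha : ∀ n, a n = Real.sqrt (n * Real.log (n / 2)))
    (hb : ∀ n, b n = (1 / 2) * Real.sqrt (n / Real.log (n / 2)))
    (x y : ℝ) :
    (∃ l : ℝ, Tendsto
        (fun n : ℕ =>
          ((P {ω | E ω ≤ (b n * y + a n) ^ 2 / n}).toReal
            - (P {ω | x ^ 2 / n < E ω ∧ E ω ≤ (b n * y + a n) ^ 2 / n}).toReal) ^ (n / 2))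
        atTop (𝓝 l)) ∧
    Tendsto
      (fun n : ℕ =>
        (Real.exp (-(x ^ 2 / n)) - Real.exp (-((b n * y + a n) ^ 2 / n))) ^ (n / 2))
      atTop (𝓝 (Real.exp (-(x ^ 2) / 2) * Real.exp (-Real.exp (-y)))) := by
  have hsq := sq_div_eq a b ha hb y
  -- log (n/2) → ∞
  have hLt : Tendsto (fun n : ℕ => Real.log ((n:ℝ) / 2)) atTop atTop :=
    Real.tendsto_log_atTop.comp (tendsto_natCast_atTop_atTop.atTop_div_const two_pos)
  constructor
  · -- first part: limit is 0
    refine ⟨0, ?_⟩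
    -- v n → ∞
    have hvt : Tendsto (fun n : ℕ => (b n * y + a n) ^ 2 / n) atTop atTop := by
      have h1 : Tendsto (fun n : ℕ => y + Real.log ((n:ℝ) / 2)) atTop atTop :=
        tendsto_atTop_add_const_left _ y hLt
      refine tendsto_atTop_mono' _ ?_ h1
      filter_upwards [eventually_ge_atTop 3] with n hn
      rw [hsq n hn]
      have hL : 0 < Real.log ((n:ℝ) / 2) := Real.log_pos (by
        have : (3:ℝ) ≤ n := by exact_mod_cast hn
        linarith)
      have : 0 ≤ y ^ 2 / (4 * Real.log ((n:ℝ) / 2)) := by positivity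
      linarith
    -- eventual identification with (1 - exp(-(x^2/n)))^(n/2)
    have hident : (fun n : ℕ => (1 - Real.exp (-(x ^ 2 / n))) ^ (n / 2)) =ᶠ[atTop]
        (fun n : ℕ =>
          ((P {ω | E ω ≤ (b n * y + a n) ^ 2 / n}).toReal
            - (P {ω | x ^ 2 / n < E ω ∧ E ω ≤ (b n * y + a n) ^ 2 / n}).toReal) ^ (n / 2)) := by
      filter_upwards [eventually_ge_atTop 1, hvt.eventually_gt_atTop (x ^ 2)] with n hn1 hgt
      have hn0 : (0:ℝ) < n := by exact_mod_cast hn1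
      have hu0 : 0 ≤ x ^ 2 / n := by positivity
      have hulev : x ^ 2 / n ≤ x ^ 2 := by
        apply div_le_self (sq_nonneg x)
        exact_mod_cast hn1
      have hultv : x ^ 2 / n < (b n * y + a n) ^ 2 / n := lt_of_le_of_lt hulev hgt
      rw [hcdf _ (le_trans hu0 hultv.le), hint _ _ hu0 hultv]
      ring_nf
    refine Tendsto.congr' hident ?_
    -- squeeze to 0
    have hx0 : Tendsto (fun n : ℕ => x ^ 2 / (n:ℝ)) atTop (𝓝 0) :=
      tendsto_const_nhds.div_atTop tendsto_natCast_atTop_atTop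
    have hhalf : Tendsto (fun n : ℕ => ((1:ℝ)/2) ^ (n / 2)) atTop (𝓝 0) :=
      (tendsto_pow_atTop_nhds_zero_of_lt_one (by norm_num) (by norm_num)).comp
        nat_div_two_tendsto
    refine tendsto_of_tendsto_of_tendsto_of_le_of_le' tendsto_const_nhds hhalf ?_ ?_
    · filter_upwards [eventually_ge_atTop 1] with n hn
      have hn0 : (0:ℝ) < n := by exact_mod_cast hn
      have : Real.exp (-(x ^ 2 / n)) ≤ 1 := Real.exp_le_one_iff.2 (neg_nonpos.2 (by positivity))
      exact pow_nonneg (by linarith) _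
    · filter_upwards [hx0.eventually (eventually_le_nhds (by norm_num : (0:ℝ) < 1/2))]
        with n hle
      have h1 : 1 - Real.exp (-(x ^ 2 / n)) ≤ x ^ 2 / n := by
        have := Real.add_one_le_exp (-(x ^ 2 / n))
        linarith
      have h0 : 0 ≤ 1 - Real.exp (-(x ^ 2 / n)) := by
        have : Real.exp (-(x ^ 2 / n)) ≤ 1 :=
          Real.exp_le_one_iff.2 (neg_nonpos.2 (by positivity))
        linarith
      exact pow_le_pow_left₀ h0 (by linarith) _
  · -- second part
    set f : ℕ → ℝ := fun n =>
      Real.exp (-(x ^ 2 / n)) - Real.exp (-((b n * y + a n) ^ 2 / n)) with hf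
    set g : ℕ → ℝ := fun n => n * (f n - 1) with hg
    have hgt : Tendsto g atTop (𝓝 (-x ^ 2 - 2 * Real.exp (-y))) := by
      have h1 : Tendsto (fun n : ℕ => (n:ℝ) * (Real.exp (-x ^ 2 / n) - 1)) atTop
          (𝓝 (-x ^ 2)) := mul_exp_sub_one (-x ^ 2)
      have h2 : Tendsto (fun n : ℕ => 2 * Real.exp (-(y + y ^ 2 / (4 * Real.log ((n:ℝ)/2)))))
          atTop (𝓝 (2 * Real.exp (-y))) := by
        have h4L : Tendsto (fun n : ℕ => 4 * Real.log ((n:ℝ)/2)) atTop atTop :=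
          hLt.const_mul_atTop (by norm_num : (0:ℝ) < 4)
        have hq : Tendsto (fun n : ℕ => y ^ 2 / (4 * Real.log ((n:ℝ)/2))) atTop (𝓝 0) :=
          tendsto_const_nhds.div_atTop h4L
        have hy : Tendsto (fun n : ℕ => -(y + y ^ 2 / (4 * Real.log ((n:ℝ)/2)))) atTop
            (𝓝 (-y)) := by
          have := ((tendsto_const_nhds : Tendsto (fun _ : ℕ => y) atTop (𝓝 y)).add hq).neg
          simpa using this
        exact ((Real.continuous_exp.tendsto _).comp hy).const_mul 2
      have h3 := h1.sub h2
      refine h3.congr' ?_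
      filter_upwards [eventually_ge_atTop 3] with n hn
      have hn3 : (3:ℝ) ≤ n := by exact_mod_cast hn
      have hn0 : (0:ℝ) < n := by linarith
      have hL : 0 < Real.log ((n:ℝ) / 2) := Real.log_pos (by linarith)
      have hexp : (n:ℝ) * Real.exp (-((b n * y + a n) ^ 2 / n))
          = 2 * Real.exp (-(y + y ^ 2 / (4 * Real.log ((n:ℝ)/2)))) := by
        rw [hsq n hn]
        rw [show -(y ^ 2 / (4 * Real.log ((n:ℝ)/2)) + y + Real.log ((n:ℝ)/2))
          = -(y + y ^ 2 / (4 * Real.log ((n:ℝ)/2))) + -Real.log ((n:ℝ)/2) by ring]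
        have hel : Real.exp (-Real.log ((n:ℝ)/2)) = 2 / n := by
          rw [Real.exp_neg, Real.exp_log (by positivity), inv_div]
        rw [Real.exp_add, hel]
        field_simp
      simp only [hg, hf]
      rw [show ((n:ℝ)) * (Real.exp (-(x ^ 2 / n)) - Real.exp (-((b n * y + a n) ^ 2 / n)) - 1)
        = (n:ℝ) * (Real.exp (-(x ^ 2 / n)) - 1) - (n:ℝ) * Real.exp (-((b n * y + a n) ^ 2 / n))
        by ring, hexp, neg_div]
    have hkey := pow_half_tendsto g _ hgt
    have hz : Real.exp ((-x ^ 2 - 2 * Real.exp (-y)) / 2)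
        = Real.exp (-(x ^ 2) / 2) * Real.exp (-Real.exp (-y)) := by
      rw [← Real.exp_add]; ring_nf
    rw [hz] at hkey
    refine hkey.congr' ?_
    filter_upwards [eventually_ge_atTop 1] with n hn
    have hn0 : ((n:ℝ)) ≠ 0 := Nat.cast_ne_zero.2 (by omega)
    simp only [hg]
    rw [mul_div_cancel_left₀ _ hn0]
    simp only [hf]
    ring_nf
end
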